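/- Let (P_n) be a partition of ℕ into nonempty finite sets and (θ_n) submeasures as in the definition of a generalized density ideal, and assume tallness: max_{i∈P_n} θ_n({i}) → 0 as n → ∞. Let ψ(A) = sup_n θ_n(A) and tail_ψ(A) = lim_{m→∞} ψ(A ∖ [0,m)) (this limit exists since ψ(A ∖ [0,m)) is nonincreasing in m). Then for every Y ⊆ ℕ and every ε with 0 < ε < tail_ψ(Y), there exists Z ⊆ Y with tail_ψ(Z) = ε. -/
import Mathlib


open Filter Topology ENNReal

/-- The pointwise supremum `ψ(A) = sup_n θ_n(A)`, valued in `[0,∞]`. -/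
noncomputable def psi (θ : ℕ → Set ℕ → ℝ) (A : Set ℕ) : ℝ≥0∞ :=
  ⨆ n, ENNReal.ofReal (θ n A)

/-- `tail_ψ(A) = lim_m ψ(A ∖ [0,m))`; since `ψ(A ∖ [0,m))` is nonincreasing in `m`,
the limit equals the infimum. -/
noncomputable def tailPsi (θ : ℕ → Set ℕ → ℝ) (A : Set ℕ) : ℝ≥0∞ :=
  ⨅ m : ℕ, psi θ (A \ Set.Iio m)

/-- Greedy selection: from a finite set with atoms bounded by `a`, one can select a
subset of submeasure at most `ε` which is either everything or has submeasure `> ε - a`. -/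
lemma greedy_select (μ : Set ℕ → ℝ)
    (hmono : ∀ A B : Set ℕ, A ⊆ B → μ A ≤ μ B)
    (hsub : ∀ A B : Set ℕ, μ (A ∪ B) ≤ μ A + μ B)
    (hempty : μ ∅ = 0) (ε a : ℝ) (hε : 0 ≤ ε) :
    ∀ F : Finset ℕ, (∀ x ∈ F, μ {x} ≤ a) →
      ∃ S : Finset ℕ, S ⊆ F ∧ μ ↑S ≤ ε ∧ (S = F ∨ ε - a < μ ↑S) := by
  classical
  intro F
  induction F using Finset.induction_on with
  | empty =>
    intro _
    exact ⟨∅, Finset.Subset.refl _, by simpa [hempty] using hε, Or.inl rfl⟩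
  | @insert x F hx ih =>
    intro hatom
    obtain ⟨S, hSF, hSε, hSor⟩ := ih (fun y hy => hatom y (Finset.mem_insert_of_mem hy))
    rcases hSor with rfl | hgt
    · by_cases h : μ ↑(insert x S) ≤ ε
      · exact ⟨insert x S, Finset.Subset.refl _, h, Or.inl rfl⟩
      · refine ⟨S, Finset.subset_insert _ _, hSε, Or.inr ?_⟩
        have h1 : μ ↑(insert x S) ≤ μ {x} + μ ↑S := by
          have he : (↑(insert x S) : Set ℕ) = {x} ∪ ↑S := by
            rw [Finset.coe_insert, Set.insert_eq]
          rw [he]; exact hsub _ _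
        have h2 : μ {x} ≤ a := hatom x (Finset.mem_insert_self _ _)
        push_neg at h
        linarith
    · exact ⟨S, hSF.trans (Finset.subset_insert _ _), hSε, Or.inr hgt⟩

theorem stmt1
    (P : ℕ → Finset ℕ) (hPne : ∀ n, (P n).Nonempty)
    (hPdisj : ∀ m n, m ≠ n → Disjoint (P m) (P n))
    (hPcov : ∀ k, ∃ n, k ∈ P n)
    (θ : ℕ → Set ℕ → ℝ)
    (hθnonneg : ∀ n A, 0 ≤ θ n A)
    (hθempty : ∀ n, θ n ∅ = 0)
    (hθmono : ∀ n A B, A ⊆ B → θ n A ≤ θ n B)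
    (hθsub : ∀ n A B, θ n (A ∪ B) ≤ θ n A + θ n B)
    (hθloc : ∀ n A, θ n A = θ n (A ∩ ↑(P n)))
    (htall : Tendsto (fun n => (P n).sup' (hPne n) fun i => θ n {i}) atTop (𝓝 0)) :
    ∀ (Y : Set ℕ) (ε : ℝ), 0 < ε → ENNReal.ofReal ε < tailPsi θ Y →
      ∃ Z ⊆ Y, tailPsi θ Z = ENNReal.ofReal ε := by
  classical
  intro Y ε hε hεY
  set a : ℕ → ℝ := fun n => (P n).sup' (hPne n) fun i => θ n {i} with ha
  -- finitely many blocks meet `[0,m)`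
  have hfin : ∀ m : ℕ, ∀ᶠ n in atTop, ∀ x ∈ P n, ¬ x < m := by
    intro m
    set g : ℕ → ℕ := fun x => Classical.choose (hPcov x) with hgdef
    have hg : ∀ x, x ∈ P (g x) := fun x => Classical.choose_spec (hPcov x)
    set T := (Finset.range m).image g with hT
    refine eventually_atTop.2 ⟨T.sup id + 1, ?_⟩
    intro n hn x hxP hxm
    have hng : n = g x := by
      by_contra hne
      exact Finset.disjoint_left.mp (hPdisj n (g x) hne) hxP (hg x)
    have hnT : n ∈ T := Finset.mem_image.2 ⟨x, Finset.mem_range.2 hxm, hng.symm⟩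
    have := Finset.le_sup (f := id) hnT
    simp only [id] at this
    omega
  set F : ℕ → Finset ℕ := fun n => (P n).filter (· ∈ Y) with hF
  have hθYF : ∀ n, θ n Y = θ n ↑(F n) := by
    intro n
    rw [hθloc n Y]
    congr 1
    ext x
    simp [hF, and_comm]
  choose S hSsub hSle hSor using fun n =>
    greedy_select (θ n) (hθmono n) (hθsub n) (hθempty n) ε (a n) hε.le (F n)
      (fun x hx => Finset.le_sup' (fun i => θ n {i}) (Finset.mem_filter.mp hx).1)
  set Z : Set ℕ := ⋃ n, (↑(S n) : Set ℕ) with hZ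
  have hSP : ∀ n, ∀ x ∈ S n, x ∈ P n :=
    fun n x hx => (Finset.mem_filter.mp (hSsub n hx)).1
  have hZY : Z ⊆ Y := by
    refine Set.iUnion_subset fun n x hx => ?_
    exact (Finset.mem_filter.mp (hSsub n hx)).2
  have hZP : ∀ n, Z ∩ ↑(P n) = (↑(S n) : Set ℕ) := by
    intro n
    ext x
    constructor
    · rintro ⟨hxZ, hxP⟩
      obtain ⟨k, hk⟩ := Set.mem_iUnion.mp hxZ
      have hxk : x ∈ P k := hSP k x hk
      have : k = n := by
        by_contra hne
        exact Finset.disjoint_left.mp (hPdisj k n hne) hxk hxP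
      rwa [this] at hk
    · intro hxS
      exact ⟨Set.mem_iUnion.2 ⟨n, hxS⟩, hSP n x hxS⟩
  have hθZ : ∀ n, θ n Z = θ n ↑(S n) := by
    intro n; rw [hθloc n Z, hZP n]
  -- frequently, θ n Y exceeds ε
  have hfreq : ∃ᶠ n in atTop, ε < θ n Y := by
    by_contra h
    rw [not_frequently] at h
    obtain ⟨N, hN⟩ := eventually_atTop.1 h
    set m := ((Finset.range N).sup fun k => (P k).sup id) + 1 with hm
    have hcon : psi θ (Y \ Set.Iio m) ≤ ENNReal.ofReal ε := by
      refine iSup_le fun n => ENNReal.ofReal_le_ofReal ?_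
      by_cases hn : n < N
      · have hx : ∀ x ∈ P n, x < m := by
          intro x hxP
          have h1 : id x ≤ (P n).sup id := Finset.le_sup hxP
          have h2 : (P n).sup id ≤ (Finset.range N).sup fun k => (P k).sup id :=
            Finset.le_sup (f := fun k => (P k).sup id) (Finset.mem_range.2 hn)
          simp only [id] at h1
          omega
        have hempty2 : (Y \ Set.Iio m) ∩ ↑(P n) = (∅ : Set ℕ) := by
          ext x
          simp only [Set.mem_inter_iff, Set.mem_diff, Set.mem_Iio, Set.mem_empty_iff_false,
            iff_false, not_and, and_imp]
          intro _ hnot hxP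
          exact hnot (hx x hxP)
        rw [hθloc n, hempty2, hθempty n]
        exact hε.le
      · push_neg at h
        calc θ n (Y \ Set.Iio m) ≤ θ n Y := hθmono n _ _ Set.diff_subset
          _ ≤ ε := by simpa using hN n (le_of_not_gt hn)
    exact absurd (le_trans (iInf_le _ m) hcon) (not_le.mpr hεY)
  -- if θ n Y > ε then the greedy set has submeasure > ε - a n
  have hSbig : ∀ n, ε < θ n Y → ε - a n < θ n ↑(S n) := by
    intro n hn
    rcases hSor n with heq | h
    · exfalso
      have : θ n ↑(S n) = θ n Y := by rw [heq, hθYF n]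
      have := hSle n
      linarith
    · exact h
  refine ⟨Z, hZY, le_antisymm ?_ ?_⟩
  · -- upper bound: tailPsi Z ≤ ε
    refine le_trans (iInf_le _ 0) ?_
    have : Z \ Set.Iio 0 = Z := by
      have h0 : Set.Iio 0 = (∅ : Set ℕ) := by ext x; simp
      rw [h0, Set.diff_empty]
    rw [this]
    refine iSup_le fun n => ENNReal.ofReal_le_ofReal ?_
    rw [hθZ n]
    exact hSle n
  · -- lower bound
    refine le_iInf fun m => ?_
    by_contra hlt
    push_neg at hlt
    have hne : psi θ (Z \ Set.Iio m) ≠ ⊤ := (hlt.trans ENNReal.ofReal_lt_top).ne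
    set r := (psi θ (Z \ Set.Iio m)).toReal with hr
    have hrε : r < ε := by
      have := (ENNReal.toReal_lt_toReal hne ENNReal.ofReal_ne_top).mpr hlt
      rwa [ENNReal.toReal_ofReal hε.le] at this
    have hδ : (0 : ℝ) < ε - r := by linarith
    have hev1 : ∀ᶠ n in atTop, a n < ε - r := htall.eventually_lt_const hδ
    obtain ⟨n, hεn, han, hPn⟩ := (hfreq.and_eventually (hev1.and (hfin m))).exists
    have h1 : θ n (Z \ Set.Iio m) = θ n ↑(S n) := by
      rw [hθloc n]
      congr 1
      rw [← hZP n]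
      ext x
      simp only [Set.mem_inter_iff, Set.mem_diff, Set.mem_Iio]
      constructor
      · rintro ⟨⟨h, _⟩, hp⟩; exact ⟨h, hp⟩
      · rintro ⟨h, hp⟩; exact ⟨⟨h, hPn x hp⟩, hp⟩
    have h2 : r < θ n (Z \ Set.Iio m) := by
      rw [h1]
      have := hSbig n hεn
      linarith
    have h3 : ENNReal.ofReal (θ n (Z \ Set.Iio m)) ≤ psi θ (Z \ Set.Iio m) :=
      le_iSup (fun k => ENNReal.ofReal (θ k (Z \ Set.Iio m))) n
    have h4 : psi θ (Z \ Set.Iio m) = ENNReal.ofReal r :=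
      (ENNReal.ofReal_toReal hne).symm
    have h5 : ENNReal.ofReal r < ENNReal.ofReal (θ n (Z \ Set.Iio m)) :=
      (ENNReal.ofReal_lt_ofReal_iff (lt_of_le_of_lt ENNReal.toReal_nonneg h2)).mpr h2
    rw [h4] at h3
    exact absurd h3 (not_le.mpr h5)
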